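/- arXiv:2503.05312 — 7 statements merged into one kernel-verified Lean document; each statement's English description precedes it below -/
import Mathlib

section
/- Let G be a split graph with partition (K, I), where K is a maximal clique of size k ≥ 1 and I is an independent set. Then k ≤ χ_o(G) ≤ k + 1. -/
variable {V : Type*} {α : Type*} {β : Type*} {W : Type*}

/-- A proper coloring of `G` with colors `Fin k`. -/
def IsProperColoring (G : SimpleGraph V) {k : ℕ} (f : V → Fin k) : Prop :=
  ∀ ⦃u w : V⦄, G.Adj u w → f u ≠ f w

/-- An odd coloring: a proper coloring such that every vertex with nonempty
neighborhood has some color appearing an odd number of times among its neighbors. -/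
def IsOddColoring (G : SimpleGraph V) {k : ℕ} (f : V → Fin k) : Prop :=
  IsProperColoring G f ∧
    ∀ v : V, (G.neighborSet v).Nonempty →
      ∃ c : Fin k, Odd {u : V | u ∈ G.neighborSet v ∧ f u = c}.ncard

/-- The chromatic number. -/
noncomputable def chi (G : SimpleGraph V) : ℕ :=
  sInf {k : ℕ | ∃ f : V → Fin k, IsProperColoring G f}

/-- The odd chromatic number. -/
noncomputable def oddChi (G : SimpleGraph V) : ℕ :=
  sInf {k : ℕ | ∃ f : V → Fin k, IsOddColoring G f}

/-- `(K, I)` is a split partition of `G`: `K` is a clique, `I` an independent set,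
they partition the vertices, and `K` is a maximal clique (no vertex of `I` is
adjacent to all of `K`). -/
def IsSplitPartition (G : SimpleGraph V) (K I : Set V) : Prop :=
  G.IsClique K ∧
  (∀ u ∈ I, ∀ w ∈ I, ¬ G.Adj u w) ∧
  K ∪ I = Set.univ ∧ Disjoint K I ∧
  (∀ u ∈ I, ¬ ∀ w ∈ K, G.Adj u w)

/-- for a split graph with maximal clique `K` of size `k ≥ 1`,
`k ≤ χ_o(G) ≤ k + 1`. -/
theorem stmt_2 [Fintype V] (G : SimpleGraph V) (K I : Set V)
    (hsplit : IsSplitPartition G K I) (k : ℕ) (hk : K.ncard = k) (hk1 : 1 ≤ k) :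
    k ≤ oddChi G ∧ oddChi G ≤ k + 1 := by
  classical
  obtain ⟨hK, hI, huniv, hdisj, hmax⟩ := hsplit
  have hmem : ∀ v : V, v ∉ K → v ∈ I := by
    intro v hv
    have : v ∈ K ∪ I := huniv ▸ Set.mem_univ v
    rcases this with h | h
    · exact absurd h hv
    · exact h
  haveI : Fintype K := (Set.toFinite K).fintype
  have hcard : Fintype.card K = k := by
    rw [← Nat.card_eq_fintype_card, Nat.card_coe_set_eq, hk]
  let e : K ≃ Fin k := Fintype.equivFinOfCardEq hcard
  let f : V → Fin (k + 1) := fun v =>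
    if h : v ∈ K then (e ⟨v, h⟩).castSucc else Fin.last k
  have hfK : ∀ v (h : v ∈ K), f v = (e ⟨v, h⟩).castSucc := fun v h => dif_pos h
  have hfI : ∀ v, v ∉ K → f v = Fin.last k := fun v h => dif_neg h
  have hproper : IsProperColoring G f := by
    intro u w hadj h
    by_cases hu : u ∈ K <;> by_cases hw : w ∈ K
    · rw [hfK u hu, hfK w hw] at h
      have := e.injective (Fin.castSucc_injective _ h)
      exact hadj.ne (congrArg Subtype.val this)
    · rw [hfK u hu, hfI w hw] at h
      exact (Fin.castSucc_lt_last _).ne h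
    · rw [hfI u hu, hfK w hw] at h
      exact (Fin.castSucc_lt_last _).ne h.symm
    · exact hI u (hmem u hu) w (hmem w hw) hadj
  have hsingle : ∀ v w (hw : w ∈ K), G.Adj v w →
      {u : V | u ∈ G.neighborSet v ∧ f u = f w} = {w} := by
    intro v w hw hadj
    ext x
    simp only [Set.mem_setOf_eq, Set.mem_singleton_iff, SimpleGraph.mem_neighborSet]
    constructor
    · rintro ⟨hx, hfx⟩
      by_cases hxK : x ∈ K
      · rw [hfK x hxK, hfK w hw] at hfx
        have := e.injective (Fin.castSucc_injective _ hfx)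
        exact congrArg Subtype.val this
      · rw [hfI x hxK, hfK w hw] at hfx
        exact absurd hfx.symm (Fin.castSucc_lt_last _).ne
    · rintro rfl
      exact ⟨hadj, rfl⟩
  have hodd : IsOddColoring G f := by
    refine ⟨hproper, ?_⟩
    intro v hv
    obtain ⟨u, hu⟩ := hv
    rw [SimpleGraph.mem_neighborSet] at hu
    obtain ⟨w, hwK, hadj⟩ : ∃ w ∈ K, G.Adj v w := by
      by_cases huK : u ∈ K
      · exact ⟨u, huK, hu⟩
      · have huI := hmem u huK
        by_cases hvK : v ∈ K
        · have := hmax u huI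
          push_neg at this
          obtain ⟨w, hwK, hnadj⟩ := this
          have hne : w ≠ v := fun h => hnadj (h ▸ hu.symm)
          exact ⟨w, hwK, hK hvK hwK hne.symm⟩
        · exact absurd hu (hI v (hmem v hvK) u huI)
    refine ⟨f w, ?_⟩
    rw [hsingle v w hwK hadj, Set.ncard_singleton]
    exact odd_one
  have hmemS : (k + 1) ∈ {m : ℕ | ∃ f : V → Fin m, IsOddColoring G f} := ⟨f, hodd⟩
  have hlow : ∀ m ∈ {m : ℕ | ∃ f : V → Fin m, IsOddColoring G f}, k ≤ m := by
    rintro m ⟨g, hg, -⟩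
    have hinj : Set.InjOn g K := by
      intro u hu w hw h
      by_contra hne
      exact hg (hK hu hw hne) h
    have h1 : K.ncard ≤ (Set.univ : Set (Fin m)).ncard :=
      Set.ncard_le_ncard_of_injOn g (fun a _ => Set.mem_univ _) hinj (Set.toFinite _)
    rwa [hk, Set.ncard_univ, Nat.card_eq_fintype_card, Fintype.card_fin] at h1
  constructor
  · exact le_csInf ⟨k + 1, hmemS⟩ hlow
  · exact Nat.sInf_le hmemS
end

section
/- Let G be a split graph with partition (K, I) where K = {v1, v2} is a maximal clique of size 2 and I is an independent set in which every vertex has at least one neighbor. Then χ_o(G) = 2 if and only if |N(v1) ∩ I| and |N(v2) ∩ I| are both even. -/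
variable {V : Type*} {α : Type*} {β : Type*} {W : Type*}

/-- for a split graph with maximal clique `K = {v₁, v₂}` and every
vertex of `I` having a neighbor, `χ_o(G) = 2` iff `|N(v₁) ∩ I|` and
`|N(v₂) ∩ I|` are both even. -/
theorem stmt_3 [Fintype V] (G : SimpleGraph V) (v₁ v₂ : V) (I : Set V)
    (hne : v₁ ≠ v₂)
    (hsplit : IsSplitPartition G {v₁, v₂} I)
    (hIdeg : ∀ u ∈ I, (G.neighborSet u).Nonempty) :
    oddChi G = 2 ↔
      Even (G.neighborSet v₁ ∩ I).ncard ∧ Even (G.neighborSet v₂ ∩ I).ncard := by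
  classical
  obtain ⟨hK, hI, huniv, hdisj, hmax⟩ := hsplit
  have hadj12 : G.Adj v₁ v₂ := hK (by simp) (by simp) hne
  have hv1I : v₁ ∉ I := fun h => Set.disjoint_left.mp hdisj (by simp) h
  have hv2I : v₂ ∉ I := fun h => Set.disjoint_left.mp hdisj (by simp) h
  have hmemI : ∀ w : V, w ≠ v₁ → w ≠ v₂ → w ∈ I := by
    intro w h1 h2
    have hw : w ∈ ({v₁, v₂} : Set V) ∪ I := huniv ▸ Set.mem_univ w
    rcases hw with h | h
    · rcases h with h | h
      · exact absurd h h1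
      · exact absurd h h2
    · exact h
  have hIadj : ∀ u ∈ I, G.Adj v₁ u → G.Adj v₂ u → False := by
    intro u hu h1 h2
    exact hmax u hu (by rintro w (rfl | rfl); exacts [h1.symm, h2.symm])
  have hN1 : G.neighborSet v₁ = insert v₂ (G.neighborSet v₁ ∩ I) := by
    ext w
    simp only [SimpleGraph.mem_neighborSet, Set.mem_insert_iff, Set.mem_inter_iff]
    constructor
    · intro h
      by_cases hw2 : w = v₂
      · exact Or.inl hw2
      · exact Or.inr ⟨h, hmemI w h.ne' hw2⟩
    · rintro (rfl | ⟨h, -⟩)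
      · exact hadj12
      · exact h
  have hN2 : G.neighborSet v₂ = insert v₁ (G.neighborSet v₂ ∩ I) := by
    ext w
    simp only [SimpleGraph.mem_neighborSet, Set.mem_insert_iff, Set.mem_inter_iff]
    constructor
    · intro h
      by_cases hw1 : w = v₁
      · exact Or.inl hw1
      · exact Or.inr ⟨h, hmemI w hw1 h.ne'⟩
    · rintro (rfl | ⟨h, -⟩)
      · exact hadj12.symm
      · exact h
  have hcard1 : (G.neighborSet v₁).ncard = (G.neighborSet v₁ ∩ I).ncard + 1 := by
    have h := Set.ncard_insert_of_notMem (a := v₂) (s := G.neighborSet v₁ ∩ I)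
      (fun h => hv2I h.2) (Set.toFinite _)
    rw [← hN1] at h
    exact h
  have hcard2 : (G.neighborSet v₂).ncard = (G.neighborSet v₂ ∩ I).ncard + 1 := by
    have h := Set.ncard_insert_of_notMem (a := v₁) (s := G.neighborSet v₂ ∩ I)
      (fun h => hv1I h.2) (Set.toFinite _)
    rw [← hN2] at h
    exact h
  constructor
  · -- forward
    intro h
    have hnon : {k : ℕ | ∃ f : V → Fin k, IsOddColoring G f}.Nonempty := by
      by_contra hc
      rw [Set.not_nonempty_iff_eq_empty] at hc
      rw [oddChi, hc, Nat.sInf_empty] at h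
      exact absurd h (by norm_num)
    have hmem := Nat.sInf_mem hnon
    rw [show sInf {k : ℕ | ∃ f : V → Fin k, IsOddColoring G f} = oddChi G from rfl, h] at hmem
    obtain ⟨f, hfp, hfo⟩ := hmem
    have fin2 : ∀ a b c : Fin 2, a ≠ b → c ≠ b → a = c := by decide
    have main : ∀ v w : V, G.Adj v w →
        (G.neighborSet v).ncard = (G.neighborSet v ∩ I).ncard + 1 →
        Even (G.neighborSet v ∩ I).ncard := by
      intro v w hvw hcard
      obtain ⟨c, hc⟩ := hfo v ⟨w, hvw⟩
      have hcne : c ≠ f v := by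
        rintro rfl
        have hemp : {u : V | u ∈ G.neighborSet v ∧ f u = f v} = ∅ := by
          ext u
          simp only [Set.mem_setOf_eq, Set.mem_empty_iff_false, iff_false, not_and]
          intro hu hfu
          exact hfp hu hfu.symm
        rw [hemp, Set.ncard_empty] at hc
        simp at hc
      have hset : {u : V | u ∈ G.neighborSet v ∧ f u = c} = G.neighborSet v := by
        ext u
        simp only [Set.mem_setOf_eq, and_iff_left_iff_imp]
        intro hu
        exact fin2 (f u) (f v) c (hfp hu).symm hcne
      rw [hset, hcard] at hc
      exact Nat.not_odd_iff_even.mp (Nat.odd_add_one.mp hc)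
    exact ⟨main v₁ v₂ hadj12 hcard1, main v₂ v₁ hadj12.symm hcard2⟩
  · -- backward
    rintro ⟨hA, hB⟩
    set f : V → Fin 2 := fun v => if G.Adj v₁ v ∨ v = v₂ then 1 else 0 with hf
    have hfval1 : ∀ u, (G.Adj v₁ u ∨ u = v₂) → f u = 1 := by
      intro u hu; simp only [hf, if_pos hu]
    have hfval0 : ∀ u, ¬(G.Adj v₁ u ∨ u = v₂) → f u = 0 := by
      intro u hu; simp only [hf, if_neg hu]
    have aux : ∀ u w, G.Adj u w → G.Adj v₁ u → w = v₂ → False := by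
      intro u w huw hu hw2
      rw [hw2] at huw
      have huI : u ∈ I := hmemI u hu.ne' huw.ne
      exact hIadj u huI hu huw.symm
    have key1 : ∀ u w, G.Adj u w → (G.Adj v₁ u ∨ u = v₂) → (G.Adj v₁ w ∨ w = v₂) → False := by
      intro u w huw hu hw
      rcases hu with hu | hu2
      · rcases hw with hw | hw2
        · by_cases hu2 : u = v₂
          · rw [hu2] at huw
            have hwI : w ∈ I := hmemI w hw.ne' huw.ne'
            exact hIadj w hwI hw huw
          · by_cases hw2 : w = v₂
            · exact aux u w huw hu hw2
            · exact hI u (hmemI u hu.ne' hu2) w (hmemI w hw.ne' hw2) huw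
        · exact aux u w huw hu hw2
      · rcases hw with hw | hw2
        · exact aux w u huw.symm hw hu2
        · rw [hu2, hw2] at huw; exact G.irrefl huw
    have key0 : ∀ u w, G.Adj u w → ¬(G.Adj v₁ u ∨ u = v₂) → ¬(G.Adj v₁ w ∨ w = v₂) → False := by
      intro u w huw hu hw
      push_neg at hu hw
      by_cases hu1 : u = v₁
      · rw [hu1] at huw; exact hw.1 huw
      · by_cases hw1 : w = v₁
        · rw [hw1] at huw; exact hu.1 huw.symm
        · exact hI u (hmemI u hu1 hu.2) w (hmemI w hw1 hw.2) huw
    have hprop : IsProperColoring G f := by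
      intro u w huw hfe
      by_cases hu : G.Adj v₁ u ∨ u = v₂ <;> by_cases hw : G.Adj v₁ w ∨ w = v₂
      · exact key1 u w huw hu hw
      · rw [hfval1 u hu, hfval0 w hw] at hfe; exact absurd hfe (by decide)
      · rw [hfval0 u hu, hfval1 w hw] at hfe; exact absurd hfe (by decide)
      · exact key0 u w huw hu hw
    have hodd : ∀ v : V, (G.neighborSet v).Nonempty →
        ∃ c : Fin 2, Odd {u : V | u ∈ G.neighborSet v ∧ f u = c}.ncard := by
      intro v hv
      by_cases hv1 : v = v₁
      · rw [hv1]
        refine ⟨1, ?_⟩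
        have hset : {u : V | u ∈ G.neighborSet v₁ ∧ f u = 1} = G.neighborSet v₁ := by
          ext u
          simp only [Set.mem_setOf_eq, and_iff_left_iff_imp]
          intro hu
          exact hfval1 u (Or.inl hu)
        rw [hset, hcard1]
        exact hA.add_one
      by_cases hv2 : v = v₂
      · rw [hv2]
        refine ⟨0, ?_⟩
        have hset : {u : V | u ∈ G.neighborSet v₂ ∧ f u = 0} = G.neighborSet v₂ := by
          ext u
          simp only [Set.mem_setOf_eq, and_iff_left_iff_imp]
          intro hu
          refine hfval0 u ?_
          intro hcon
          rcases hcon with h | h2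
          · exact hIadj u (hmemI u h.ne' hu.ne') h hu
          · rw [h2] at hu; exact G.irrefl hu
        rw [hset, hcard2]
        exact hB.add_one
      · have hvI : v ∈ I := hmemI v hv1 hv2
        obtain ⟨w, hw⟩ := hv
        have hw : G.Adj v w := hw
        have notI : ∀ x, G.Adj v x → x = v₁ ∨ x = v₂ := by
          intro x hx
          by_contra hc
          push_neg at hc
          exact hI v hvI x (hmemI x hc.1 hc.2) hx
        have hNv : G.neighborSet v = {w} := by
          ext x
          simp only [SimpleGraph.mem_neighborSet, Set.mem_singleton_iff]
          constructor
          · intro hx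
            rcases notI x hx with hx1 | hx2 <;> rcases notI w hw with hw1 | hw2
            · rw [hx1, hw1]
            · rw [hx1] at hx; rw [hw2] at hw
              exact (hIadj v hvI hx.symm hw.symm).elim
            · rw [hx2] at hx; rw [hw1] at hw
              exact (hIadj v hvI hw.symm hx.symm).elim
            · rw [hx2, hw2]
          · rintro rfl; exact hw
        refine ⟨f w, ?_⟩
        have hset : {u : V | u ∈ G.neighborSet v ∧ f u = f w} = {w} := by
          ext x
          simp only [Set.mem_setOf_eq, hNv, Set.mem_singleton_iff]
          constructor
          · rintro ⟨h, -⟩; exact h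
          · rintro rfl; exact ⟨rfl, rfl⟩
        rw [hset, Set.ncard_singleton]
        exact odd_one
    have hmem2 : (2 : ℕ) ∈ {k : ℕ | ∃ f : V → Fin k, IsOddColoring G f} := ⟨f, hprop, hodd⟩
    have hlb : ∀ k ∈ {k : ℕ | ∃ f : V → Fin k, IsOddColoring G f}, 2 ≤ k := by
      rintro k ⟨g, hg, -⟩
      have hgne : g v₁ ≠ g v₂ := hg hadj12
      have : Nontrivial (Fin k) := ⟨_, _, hgne⟩
      exact Fin.nontrivial_iff_two_le.mp this
    exact le_antisymm (Nat.sInf_le hmem2) (le_csInf ⟨2, hmem2⟩ hlb)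
end

section
/- Let G be a split graph with partition (K, I), |K| = k ≥ 3, K maximal. If there exists a vertex v in K with no neighbor in I, then χ_o(G) = k. -/
variable {V : Type*} {α : Type*} {β : Type*} {W : Type*}

/-- for a split graph with maximal clique of size `k ≥ 3`, if some
vertex of `K` has no neighbor in `I`, then `χ_o(G) = k`. -/
theorem stmt_4 [Fintype V] (G : SimpleGraph V) (K I : Set V)
    (hsplit : IsSplitPartition G K I) (k : ℕ) (hk : K.ncard = k) (hk3 : 3 ≤ k)
    (v : V) (hv : v ∈ K) (hno : G.neighborSet v ∩ I = ∅) :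
    oddChi G = k := by
  classical
  obtain ⟨hclique, hind, huniv, hdisj, hmax⟩ := hsplit
  have hIK : ∀ x, x ∉ K → x ∈ I := by
    intro x hx
    have : x ∈ K ∪ I := huniv ▸ Set.mem_univ x
    rcases this with h | h
    · exact absurd h hx
    · exact h
  have hvI : ∀ u ∈ I, ¬ G.Adj v u := by
    intro u hu hadj
    have : u ∈ G.neighborSet v ∩ I := ⟨hadj, hu⟩
    rw [hno] at this; exact this
  have hKI : ∀ u ∈ I, u ∉ K := fun u hu hK =>
    Set.disjoint_left.mp hdisj hK hu
  -- the bijection K ≃ Fin k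
  have hcard : Fintype.card K = k := by
    rw [← hk, ← Nat.card_coe_set_eq, Nat.card_eq_fintype_card]
  let e : K ≃ Fin k := Fintype.equivFinOfCardEq hcard
  -- the coloring
  let f : V → Fin k := fun x => if h : x ∈ K then e ⟨x, h⟩ else e ⟨v, hv⟩
  have hfK : ∀ x (hx : x ∈ K), f x = e ⟨x, hx⟩ := fun x hx => dif_pos hx
  have hfI : ∀ x, x ∉ K → f x = e ⟨v, hv⟩ := fun x hx => dif_neg hx
  have hinj : ∀ x (hx : x ∈ K) y (hy : y ∈ K), f x = f y → x = y := by
    intro x hx y hy h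
    rw [hfK x hx, hfK y hy] at h
    have := e.injective h
    exact congrArg Subtype.val this
  -- properness
  have hproper : IsProperColoring G f := by
    intro x y hadj hfeq
    by_cases hx : x ∈ K <;> by_cases hy : y ∈ K
    · exact hadj.ne (hinj x hx y hy hfeq)
    · rw [hfK x hx, hfI y hy] at hfeq
      have : x = v := by
        have := e.injective hfeq
        exact congrArg Subtype.val this
      exact hvI y (hIK y hy) (this ▸ hadj)
    · rw [hfI x hx, hfK y hy] at hfeq
      have : y = v := by
        have := e.injective hfeq.symm
        exact congrArg Subtype.val this
      exact hvI x (hIK x hx) (this ▸ hadj.symm)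
    · exact hind x (hIK x hx) y (hIK y hy) hadj
  -- odd condition
  have hodd : IsOddColoring G f := by
    refine ⟨hproper, ?_⟩
    intro x hx
    -- find a neighbor w ∈ K with w ≠ v
    have key : ∃ w ∈ K, w ≠ v ∧ G.Adj x w := by
      by_cases hxK : x ∈ K
      · have hsub : ¬ K ⊆ {v, x} := by
          intro hsub
          have := Set.ncard_le_ncard hsub (Set.toFinite _)
          have h2 : ({v, x} : Set V).ncard ≤ 2 :=
            le_trans (Set.ncard_insert_le _ _)
              (by simp [Set.ncard_singleton])
          omega
        obtain ⟨w, hwK, hw⟩ := Set.not_subset.mp hsub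
        simp only [Set.mem_insert_iff, Set.mem_singleton_iff, not_or] at hw
        exact ⟨w, hwK, hw.1, hclique hxK hwK (Ne.symm hw.2)⟩
      · obtain ⟨w, hw⟩ := hx
        have hwI : w ∉ I := by
          intro hwI
          exact hind x (hIK x hxK) w hwI hw
        have hwK : w ∈ K := by
          by_contra h; exact hwI (hIK w h)
        refine ⟨w, hwK, ?_, hw⟩
        intro hwv
        exact hvI x (hIK x hxK) (hwv ▸ hw).symm
    obtain ⟨w, hwK, hwv, hadj⟩ := key
    refine ⟨f w, ?_⟩
    have hset : {u : V | u ∈ G.neighborSet x ∧ f u = f w} = {w} := by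
      ext u
      simp only [Set.mem_setOf_eq, Set.mem_singleton_iff, SimpleGraph.mem_neighborSet]
      constructor
      · rintro ⟨hadju, hfu⟩
        by_cases huK : u ∈ K
        · exact hinj u huK w hwK hfu
        · rw [hfI u huK, hfK w hwK] at hfu
          have : v = w := by
            have := e.injective hfu
            exact congrArg Subtype.val this
          exact absurd this.symm hwv
      · rintro rfl; exact ⟨hadj, rfl⟩
    rw [hset, Set.ncard_singleton]
    exact odd_one
  -- conclude
  have hmem : k ∈ {m : ℕ | ∃ f : V → Fin m, IsOddColoring G f} := ⟨f, hodd⟩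
  refine le_antisymm (Nat.sInf_le hmem) ?_
  refine le_csInf ⟨k, hmem⟩ ?_
  rintro m ⟨g, hg, -⟩
  -- g is injective on K
  have hginj : Set.InjOn g K := by
    intro x hx y hy hxy
    by_contra hne
    exact hg (hclique hx hy hne) hxy
  calc k = K.ncard := hk.symm
    _ = (g '' K).ncard := (Set.ncard_image_of_injOn hginj).symm
    _ ≤ (Set.univ : Set (Fin m)).ncard :=
        Set.ncard_le_ncard (Set.subset_univ _) (Set.toFinite _)
    _ = m := by simp [Set.ncard_univ]
end

section
/- For every connected cograph G with at least two vertices, χ(G) ≤ χ_o(G) ≤ χ(G) + 2. -/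
variable {V : Type*} {α : Type*} {β : Type*} {W : Type*}

/-- `G` is a cograph: it has no induced path on four vertices. -/
def IsCograph (G : SimpleGraph V) : Prop :=
  ∀ a b c d : V, a ≠ b → a ≠ c → a ≠ d → b ≠ c → b ≠ d → c ≠ d →
    ¬ (G.Adj a b ∧ G.Adj b c ∧ G.Adj c d ∧
        ¬ G.Adj a c ∧ ¬ G.Adj a d ∧ ¬ G.Adj b d)

/-- In a cograph, two distinct non-adjacent vertices joined by a walk have a
common neighbor. -/
lemma IsCograph.common_neighbor {G : SimpleGraph V} (hcog : IsCograph G)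
    {x u : V} (p : G.Walk x u) :
    x ≠ u → ¬G.Adj x u → ∃ y, G.Adj x y ∧ G.Adj y u := by
  induction p with
  | nil => intro hne _; exact absurd rfl hne
  | @cons s b t h q ih =>
    intro hne hnadj
    by_cases hbt : b = t
    · subst hbt; exact absurd h hnadj
    by_cases hbadj : G.Adj b t
    · exact ⟨b, h, hbadj⟩
    obtain ⟨y, hby, hyt⟩ := ih hbt hbadj
    by_cases hxy : G.Adj s y
    · exact ⟨y, hxy, hyt⟩
    exfalso
    have hsy : s ≠ y := by rintro rfl; exact hnadj hyt
    exact hcog s b y t h.ne hsy hne hby.ne hbt hyt.ne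
      ⟨h, hby, hyt, hxy, hnadj, hbadj⟩

/-- A connected cograph on at least two vertices has a dominating edge. -/
lemma IsCograph.dominating_edge [Fintype V] {G : SimpleGraph V}
    (hcog : IsCograph G) (hconn : G.Connected) (hcard : 2 ≤ Fintype.card V) :
    ∃ u w, G.Adj u w ∧ ∀ v, G.Adj v u ∨ G.Adj v w ∨ v = u ∨ v = w := by
  classical
  -- there exists at least one edge
  have hedge : ∃ a b, G.Adj a b := by
    obtain ⟨a, b, hab⟩ := Fintype.exists_pair_of_one_lt_card (α := V) (by omega)
    obtain ⟨p⟩ := hconn.preconnected a b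
    cases p with
    | nil => exact absurd rfl hab
    | cons h _ => exact ⟨_, _, h⟩
  -- maximize the dominated set over all edges
  set D : V → V → Finset V :=
    fun a b => Finset.univ.filter (fun v => G.Adj v a ∨ G.Adj v b) with hD
  set S : Finset (V × V) := Finset.univ.filter (fun p => G.Adj p.1 p.2) with hS
  have hSne : S.Nonempty := by
    obtain ⟨a, b, hab⟩ := hedge
    exact ⟨(a, b), by simp [hS, hab]⟩
  obtain ⟨⟨u, w⟩, hmemS, hmax⟩ :=
    S.exists_max_image (fun p => (D p.1 p.2).card) hSne
  have huw : G.Adj u w := by simpa [hS] using hmemS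
  refine ⟨u, w, huw, ?_⟩
  intro x
  by_contra hx
  push_neg at hx
  obtain ⟨hxu, hxw, hxune, hxwne⟩ := hx
  -- find a common neighbor y of x and u
  obtain ⟨p⟩ := hconn.preconnected x u
  obtain ⟨y, hxy, hyu⟩ := hcog.common_neighbor p hxune hxu
  -- y is adjacent to w too
  have hyw : G.Adj y w := by
    by_contra hyw
    have hywne : y ≠ w := by rintro rfl; exact hxw hxy
    exact hcog x y u w hxy.ne hxune hxwne hyu.ne hywne huw.ne
      ⟨hxy, hyu, huw, hxu, hxw, hyw⟩
  -- the edge (u, y) dominates strictly more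
  have hsub : D u w ⊆ D u y := by
    intro z hz
    simp only [hD, Finset.mem_filter, Finset.mem_univ, true_and] at hz ⊢
    rcases hz with hzu | hzw
    · exact Or.inl hzu
    by_cases hzu' : G.Adj z u
    · exact Or.inl hzu'
    by_cases hzy : G.Adj z y
    · exact Or.inr hzy
    exfalso
    have hzyne : z ≠ y := by rintro rfl; exact hzu' hyu
    by_cases hzeu : z = u
    · exact hzy (hzeu ▸ hyu.symm)
    by_cases hzx : G.Adj z x
    · -- induced P4: u - w - z - x
      exact hcog u w z x huw.ne (fun h => hzeu h.symm) (fun h => hxune h.symm)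
        hzw.ne.symm (fun h => hxwne h.symm) hzx.ne
        ⟨huw, hzw.symm, hzx, fun h => hzu' h.symm, fun h => hxu h.symm,
          fun h => hxw h.symm⟩
    · -- induced P4: z - w - y - x
      exact hcog z w y x hzw.ne hzyne (fun h => hxw (h ▸ hzw)) hyw.ne.symm
        (fun h => hxwne h.symm) hxy.ne.symm
        ⟨hzw, hyw.symm, hxy.symm, hzy, hzx, fun h => hxw h.symm⟩
  have hxD : x ∈ D u y := by
    simp [hD, hxy]
  have hxnD : x ∉ D u w := by
    simp [hD, hxu, hxw]
  have hss : D u w ⊂ D u y := ⟨hsub, fun h => hxnD (h hxD)⟩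
  have hlt : (D u w).card < (D u y).card := Finset.card_lt_card hss
  have : (D u y).card ≤ (D u w).card :=
    hmax (u, y) (by simp [hS, hyu.symm])
  omega

/-- for every connected cograph with at least two vertices,
`χ(G) ≤ χ_o(G) ≤ χ(G) + 2`. -/
theorem stmt_10 [Fintype V] (G : SimpleGraph V)
    (hcog : IsCograph G) (hconn : G.Connected) (hcard : 2 ≤ Fintype.card V) :
    chi G ≤ oddChi G ∧ oddChi G ≤ chi G + 2 := by
  classical
  -- the set of proper-colorable sizes is nonempty
  have hPne : {k : ℕ | ∃ f : V → Fin k, IsProperColoring G f}.Nonempty := by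
    refine ⟨Fintype.card V, ⇑(Fintype.equivFin V), ?_⟩
    intro a b hab h
    exact hab.ne ((Fintype.equivFin V).injective h)
  obtain ⟨f, hf⟩ : ∃ f : V → Fin (chi G), IsProperColoring G f :=
    Nat.sInf_mem hPne
  obtain ⟨u, w, huw, hdom⟩ := hcog.dominating_edge hconn hcard
  -- build an odd coloring with n + 2 colors
  set c1 : Fin (chi G + 2) := ⟨chi G, by omega⟩ with hc1
  set c2 : Fin (chi G + 2) := ⟨chi G + 1, by omega⟩ with hc2
  set g : V → Fin (chi G + 2) := fun v =>
    if v = u then c1 else if v = w then c2 else ⟨(f v).1, by omega⟩ with hg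
  have hgu : g u = c1 := by simp [hg]
  have hgw : g w = c2 := by simp [hg, huw.ne.symm]
  have hval : ∀ v, (g v : ℕ) =
      if v = u then chi G else if v = w then chi G + 1 else ((f v : ℕ)) := by
    intro v
    by_cases h1 : v = u
    · simp [hg, h1, hc1]
    · by_cases h2 : v = w
      · simp [hg, h2, huw.ne.symm, hc2]
      · simp [hg, h1, h2]
  have hgproper : IsProperColoring G g := by
    intro a b hab hgab
    have h := congrArg Fin.val hgab
    rw [hval a, hval b] at h
    have hfa := (f a).isLt
    have hfb := (f b).isLt
    split_ifs at h
    all_goals try omega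
    · exact hab.ne (by rw [‹a = u›, ‹b = u›])
    · exact hab.ne (by rw [‹a = w›, ‹b = w›])
    · exact hf hab (Fin.ext h)
  -- only u has color c1, only w has color c2
  have honlyu : ∀ x, g x = c1 → x = u := by
    intro x hx
    have h : (if x = u then chi G else if x = w then chi G + 1 else ((f x : ℕ))) = chi G := by
      rw [← hval x, hx, hc1]
    have hfx := (f x).isLt
    split_ifs at h with h1 h2
    · exact h1
    · omega
    · omega
  have honlyw : ∀ x, g x = c2 → x = w := by
    intro x hx
    have h : (if x = u then chi G else if x = w then chi G + 1 else ((f x : ℕ))) = chi G + 1 := by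
      rw [← hval x, hx, hc2]
    have hfx := (f x).isLt
    split_ifs at h with h1 h2
    · omega
    · exact h2
    · omega
  -- a vertex adjacent to u is happy via color c1; similarly for w and c2
  have hhappy1 : ∀ v, G.Adj v u →
      {x : V | x ∈ G.neighborSet v ∧ g x = c1}.ncard = 1 := by
    intro v hv
    have : {x : V | x ∈ G.neighborSet v ∧ g x = c1} = {u} := by
      ext x
      simp only [Set.mem_setOf_eq, SimpleGraph.mem_neighborSet, Set.mem_singleton_iff]
      constructor
      · rintro ⟨_, hx⟩; exact honlyu x hx
      · rintro rfl; exact ⟨hv, hgu⟩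
    rw [this, Set.ncard_singleton]
  have hhappy2 : ∀ v, G.Adj v w →
      {x : V | x ∈ G.neighborSet v ∧ g x = c2}.ncard = 1 := by
    intro v hv
    have : {x : V | x ∈ G.neighborSet v ∧ g x = c2} = {w} := by
      ext x
      simp only [Set.mem_setOf_eq, SimpleGraph.mem_neighborSet, Set.mem_singleton_iff]
      constructor
      · rintro ⟨_, hx⟩; exact honlyw x hx
      · rintro rfl; exact ⟨hv, hgw⟩
    rw [this, Set.ncard_singleton]
  have hgodd : IsOddColoring G g := by
    refine ⟨hgproper, ?_⟩
    intro v _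
    rcases hdom v with h | h | h | h
    · exact ⟨c1, by rw [hhappy1 v h]; exact odd_one⟩
    · exact ⟨c2, by rw [hhappy2 v h]; exact odd_one⟩
    · subst h; exact ⟨c2, by rw [hhappy2 v huw]; exact odd_one⟩
    · subst h; exact ⟨c1, by rw [hhappy1 v huw.symm]; exact odd_one⟩
  have hOmem : (chi G + 2) ∈ {k : ℕ | ∃ f : V → Fin k, IsOddColoring G f} :=
    ⟨g, hgodd⟩
  have hOne : {k : ℕ | ∃ f : V → Fin k, IsOddColoring G f}.Nonempty :=
    ⟨chi G + 2, hOmem⟩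
  constructor
  · obtain ⟨g', hg'⟩ : ∃ f : V → Fin (oddChi G), IsOddColoring G f :=
      Nat.sInf_mem hOne
    exact Nat.sInf_le ⟨g', hg'.1⟩
  · exact Nat.sInf_le hOmem
end

section
/- Every graph G satisfies χ_o(G) ≤ 2·tw(G) + 1, where tw(G) is the treewidth of G. -/
variable {V : Type*} {α : Type*} {β : Type*} {W : Type*}

/-- A tree decomposition of `G`: a tree whose nodes carry bags of vertices such
that every vertex appears in a bag, the endpoints of every edge share a bag, and
for every vertex the set of nodes whose bag contains it induces a connected
subgraph of the tree. -/
structure TreeDecomposition (G : SimpleGraph V) where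
  ι : Type
  tree : SimpleGraph ι
  isTree : tree.IsTree
  bag : ι → Finset V
  mem_bag : ∀ v : V, ∃ i : ι, v ∈ bag i
  edge_bag : ∀ ⦃u w : V⦄, G.Adj u w → ∃ i : ι, u ∈ bag i ∧ w ∈ bag i
  bag_connected : ∀ v : V, (tree.induce {i : ι | v ∈ bag i}).Connected

/-- The treewidth of `G`: the least `w` such that `G` has a tree decomposition
all of whose bags have size at most `w + 1`. -/
noncomputable def treewidth (G : SimpleGraph V) : ℕ :=
  sInf {w : ℕ | ∃ td : TreeDecomposition G, ∀ i : td.ι, (td.bag i).card ≤ w + 1}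

/-!
Root a tree decomposition of width `t` and order the vertices by the depth of the highest node
whose bag contains them. Since the bags containing a vertex form a subtree, two vertices sharing a
bag both lie in the top bag of the later one. Hence the earlier neighbours of each vertex `v` in the
graph of bag-sharing pairs form a clique of size at most `t`. Colour greedily in this order: the new
colour of `v` must avoid the colours of these at most `t` vertices, which keeps the colouring proper
and makes every colour of a neighbour occur exactly once at `v`, and it must avoid one odd colour at
each earlier neighbour of `v`, which keeps those odd. So `2 * t + 1` colours suffice.
-/

namespace SimpleGraph

variable {ι : Type*} {T : SimpleGraph ι}

theorem Walk.IsPath.append {u v w : ι} {p : T.Walk u v} {q : T.Walk v w} (hp : p.IsPath)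
    (hq : q.IsPath) (h : ∀ x ∈ p.support, x ∈ q.support → x = v) : (p.append q).IsPath := by
  have hq' := q.cons_tail_support ▸ hq.support_nodup
  rw [Walk.isPath_def, Walk.support_append]
  refine hp.support_nodup.append (List.nodup_cons.mp hq').2 fun x hxp hxq => ?_
  have hxv := h x hxp (q.cons_tail_support ▸ List.mem_cons_of_mem _ hxq)
  exact (List.nodup_cons.mp hq').1 (hxv ▸ hxq)

theorem IsAcyclic.mem_of_mem_support_of_induce_connected {A : Set ι} (hT : T.IsAcyclic)
    (hA : (T.induce A).Connected) {u v : ι} (hu : u ∈ A) (hv : v ∈ A) {p : T.Walk u v}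
    (hp : p.IsPath) :
    ∀ x ∈ p.support, x ∈ A := by
  classical
  obtain ⟨q⟩ := hA.preconnected ⟨u, hu⟩ ⟨v, hv⟩
  let q' := q.map (Embedding.induce A).toHom
  have hpq : p = q'.bypass := congrArg Subtype.val <|
    (hT.subsingleton_path u v).elim ⟨p, hp⟩ ⟨_, q'.bypass_isPath⟩
  intro x hx
  rw [hpq] at hx
  have hx' : x ∈ q'.support := q'.support_bypass_subset_support hx
  rw [Walk.support_map] at hx'
  obtain ⟨y, -, rfl⟩ := List.mem_map.mp hx'
  exact y.2

theorem IsTree.dist_eq_length (hT : T.IsTree) {u v : ι} {p : T.Walk u v} (hp : p.IsPath) :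
    T.dist u v = p.length := by
  obtain ⟨q, hq, hlen⟩ := (hT.connected u v).exists_path_of_dist
  rw [← hlen, (hT.existsUnique_path u v).unique hp hq]

theorem IsTree.dist_add_dist_of_mem_support (hT : T.IsTree) {u v x : ι} {p : T.Walk u v}
    (hp : p.IsPath) (hx : x ∈ p.support) : T.dist u x + T.dist x v = T.dist u v := by
  classical
  rw [hT.dist_eq_length (hp.takeUntil hx), hT.dist_eq_length (hp.dropUntil hx),
    hT.dist_eq_length hp, ← Walk.length_append, Walk.take_spec]

theorem IsTree.eq_of_mem_support_of_dist_le (hT : T.IsTree) {u v x : ι} {p : T.Walk u v}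
    (hp : p.IsPath) (hx : x ∈ p.support) (hle : T.dist u v ≤ T.dist u x) : x = v := by
  have := hT.dist_add_dist_of_mem_support hp hx
  exact (hT.connected x v).dist_eq_zero_iff.mp (by omega)

theorem IsTree.mem_support_of_isMinOn (hT : T.IsTree) {A : Set ι} (hA : (T.induce A).Connected)
    {r m j : ι} (hm : m ∈ A) (hmin : IsMinOn (T.dist r) A m) (hj : j ∈ A) {p : T.Walk r j}
    (hp : p.IsPath) : m ∈ p.support := by
  obtain ⟨q, hq, -⟩ := (hT.connected r m).exists_path_of_dist
  obtain ⟨z, hz, -⟩ := (hT.connected m j).exists_path_of_dist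
  have hqz : (q.append z).IsPath := hq.append hz fun x hxq hxz =>
    hT.eq_of_mem_support_of_dist_le hq hxq <| isMinOn_iff.mp hmin x <|
      hT.isAcyclic.mem_of_mem_support_of_induce_connected hA hm hj hz x hxz
  rw [(hT.existsUnique_path r j).unique hp hqz]
  exact Walk.mem_support_append_iff _ _ |>.mpr (.inl q.end_mem_support)

theorem IsTree.mem_of_isMinOn_of_le (hT : T.IsTree) {A B : Set ι} (hA : (T.induce A).Connected)
    (hB : (T.induce B).Connected) {r a b j : ι} (ha : a ∈ A) (haA : IsMinOn (T.dist r) A a)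
    (hb : b ∈ B) (hbB : IsMinOn (T.dist r) B b) (hjA : j ∈ A) (hjB : j ∈ B)
    (hab : T.dist r a ≤ T.dist r b) : b ∈ A := by
  classical
  obtain ⟨p, hp, -⟩ := (hT.connected r j).exists_path_of_dist
  have hpa := hT.mem_support_of_isMinOn hA ha haA hjA hp
  have hpb := hT.mem_support_of_isMinOn hB hb hbB hjB hp
  rw [← p.take_spec hpa, Walk.mem_support_append_iff] at hpb
  rcases hpb with hbtake | hbdrop
  · rw [hT.eq_of_mem_support_of_dist_le (hp.takeUntil hpa) hbtake hab]
    exact ha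
  · exact hT.isAcyclic.mem_of_mem_support_of_induce_connected hA ha hjA (hp.dropUntil hpa) b
      hbdrop

end SimpleGraph

section OddColoringOn

variable {G H : SimpleGraph V}

def IsProperOn (H : SimpleGraph V) (s : Set V) (f : V → α) : Prop :=
  ∀ ⦃u⦄, u ∈ s → ∀ ⦃w⦄, w ∈ s → H.Adj u w → f u ≠ f w

def IsOddOn (G : SimpleGraph V) (s : Set V) (f : V → α) : Prop :=
  ∀ v ∈ s, (∃ u ∈ s, G.Adj v u) → ∃ c, Odd {u | u ∈ s ∧ G.Adj v u ∧ f u = c}.ncard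

theorem exists_forall_ne_ne [Fintype α] (g₁ g₂ : V → α) (B : Finset V)
    (hB : 2 * B.card < Fintype.card α) : ∃ c, ∀ w ∈ B, g₁ w ≠ c ∧ g₂ w ≠ c := by
  classical
  have hcard : (B.image g₁ ∪ B.image g₂).card < (Finset.univ : Finset α).card :=
    calc (B.image g₁ ∪ B.image g₂).card
        ≤ (B.image g₁).card + (B.image g₂).card := Finset.card_union_le _ _
      _ ≤ B.card + B.card := add_le_add Finset.card_image_le Finset.card_image_le
      _ < _ := by rw [Finset.card_univ]; omega
  obtain ⟨c, -, hc⟩ := Finset.exists_mem_notMem_of_card_lt_card hcard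
  exact ⟨c, fun w hw =>
    ⟨fun h => hc (Finset.mem_union_left _ (h ▸ Finset.mem_image_of_mem g₁ hw)), 
      fun h => hc (Finset.mem_union_right _ (h ▸ Finset.mem_image_of_mem g₂ hw))⟩⟩

theorem IsProperOn.update_insert [DecidableEq V] {s : Set V} {a : V} {f : V → α} {c : α}
    (hf : IsProperOn H s f) (ha : a ∉ s) (hc : ∀ u ∈ s, H.Adj a u → f u ≠ c) :
    IsProperOn H (insert a s) (Function.update f a c) := by
  have hfs : ∀ u ∈ s, Function.update f a c u = f u := fun u hu =>
    Function.update_of_ne (ne_of_mem_of_not_mem hu ha) c f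
  rintro u (rfl | hu) w (rfl | hw) huw
  · exact (H.loopless.irrefl _ huw).elim
  · rw [Function.update_self, hfs w hw]
    exact (hc w hw huw).symm
  · rw [Function.update_self, hfs u hu]
    exact hc u hu huw.symm
  · rw [hfs u hu, hfs w hw]
    exact hf hu hw huw

theorem setOf_update_insert [DecidableEq V] {s : Set V} {a w : V} {f : V → α} {c d : α}
    (ha : a ∉ s) (h : G.Adj w a → d ≠ c) :
    {u | u ∈ insert a s ∧ G.Adj w u ∧ Function.update f a c u = d} =
      {u | u ∈ s ∧ G.Adj w u ∧ f u = d} := by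
  ext u
  by_cases hua : u = a
  · subst hua
    simp only [Set.mem_ofPred_eq, Function.update_self, ha, false_and, iff_false]
    exact fun ⟨_, hadj, hcd⟩ => h hadj hcd.symm
  · simp only [Set.mem_ofPred_eq, Set.mem_insert_iff, hua, false_or, ne_eq, not_false_eq_true,
      Function.update_of_ne]

theorem IsOddOn.update_insert [DecidableEq V] {s : Set V} {a : V} {f : V → α} {c : α}
    (hf : IsOddOn G s f) (ha : a ∉ s)
    (hinj : ∀ u ∈ s, ∀ u' ∈ s, G.Adj a u → G.Adj a u' → f u = f u' → u = u')
    (hc : ∀ w ∈ s, G.Adj w a → (∃ u ∈ s, G.Adj w u) →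
      ∃ d ≠ c, Odd {u | u ∈ s ∧ G.Adj w u ∧ f u = d}.ncard) :
    IsOddOn G (insert a s) (Function.update f a c) := by
  have hfs : ∀ u ∈ s, Function.update f a c u = f u := fun u hu =>
    Function.update_of_ne (ne_of_mem_of_not_mem hu ha) c f
  rintro v (rfl | hv) ⟨u₀, hu₀, hvu₀⟩
  · have hu₀s : u₀ ∈ s := hu₀.resolve_left hvu₀.ne'
    refine ⟨f u₀, ?_⟩
    convert Set.ncard_singleton u₀ ▸ odd_one
    ext u
    simp only [Set.mem_ofPred_eq, Set.mem_singleton_iff]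
    constructor
    · rintro ⟨hu, hvu, hfu⟩
      have hus : u ∈ s := hu.resolve_left hvu.ne'
      exact hinj u hus u₀ hu₀s hvu hvu₀ (hfs u hus ▸ hfu)
    · rintro rfl
      exact ⟨Set.mem_insert_of_mem _ hu₀s, hvu₀, hfs u hu₀s⟩
  · by_cases hnbr : ∃ u ∈ s, G.Adj v u
    · by_cases hva : G.Adj v a
      · obtain ⟨d, hdc, hd⟩ := hc v hv hva hnbr
        exact ⟨d, setOf_update_insert ha (fun _ => hdc) ▸ hd⟩
      · obtain ⟨d, hd⟩ := hf v hv hnbr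
        exact ⟨d, setOf_update_insert ha (fun h => (hva h).elim) ▸ hd⟩
    · refine ⟨c, ?_⟩
      convert Set.ncard_singleton a ▸ odd_one
      ext u
      simp only [Set.mem_ofPred_eq, Set.mem_singleton_iff]
      refine ⟨fun ⟨hu, hvu, _⟩ => hu.resolve_right fun hus => hnbr ⟨u, hus, hvu⟩, ?_⟩
      have hu₀a : u₀ = a := hu₀.resolve_right fun h => hnbr ⟨u₀, h, hvu₀⟩
      rintro rfl
      exact ⟨Set.mem_insert _ _, hu₀a ▸ hvu₀, Function.update_self _ _ _⟩

theorem exists_extension_insert [Fintype α] [DecidableEq V] {t : ℕ}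
    (hα : 2 * t < Fintype.card α) (hGH : G ≤ H) {s : Set V} {a : V} (ha : a ∉ s)
    {f : V → α} (hprop : IsProperOn H s f) (hodd : IsOddOn G s f) {B : Finset V}
    (hB_card : B.card ≤ t) (hB_clique : H.IsClique (B : Set V))
    (hB : ∀ u ∈ s, H.Adj a u → u ∈ B) :
    ∃ g : V → α, IsProperOn H (insert a s) g ∧ IsOddOn G (insert a s) g := by
  have : Nonempty α := Fintype.card_pos_iff.mp (by omega)
  choose! wit hwit using id hodd
  obtain ⟨c, hc⟩ := exists_forall_ne_ne f wit B (by omega)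
  refine ⟨Function.update f a c, hprop.update_insert ha fun u hu hau => (hc u (hB u hu hau)).1,
    hodd.update_insert ha (fun u hu u' hu' hau hau' hfu => ?_) fun w hw hwa hnbr =>
      ⟨wit w, (hc w (hB w hw (hGH hwa.symm))).2, hwit w hw hnbr⟩⟩
  by_contra hne
  exact hprop hu hu' (hB_clique (hB u hu (hGH hau)) (hB u' hu' (hGH hau')) hne) hfu

theorem exists_isOddColoring_of_elimination [Fintype V] (hGH : G ≤ H) {t : ℕ} (rk : V → ℕ)
    (B : V → Finset V) (hB_card : ∀ v, (B v).card ≤ t)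
    (hB_clique : ∀ v, H.IsClique (B v : Set V))
    (hB : ∀ ⦃u v⦄, H.Adj v u → rk u ≤ rk v → u ∈ B v) :
    ∃ f : V → Fin (2 * t + 1), IsOddColoring G f := by
  classical
  have hext : ∀ s : Finset V, ∃ f : V → Fin (2 * t + 1),
      IsProperOn H (s : Set V) f ∧ IsOddOn G (s : Set V) f := by
    intro s
    induction s using Finset.induction_on_max_value rk with
    | empty => exact ⟨fun _ => 0, by simp [IsProperOn], by simp [IsOddOn]⟩
    | insert a s ha hmax ih =>
      obtain ⟨f, hprop, hodd⟩ := ih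
      rw [Finset.coe_insert]
      exact exists_extension_insert (by simp) hGH (by simpa using ha) hprop hodd (hB_card a)
        (hB_clique a) fun u hu hau => hB hau (hmax u hu)
  obtain ⟨f, hprop, hodd⟩ := hext Finset.univ
  refine ⟨f, fun u w huw => hprop (by simp) (by simp) (hGH huw), fun v ⟨u, hvu⟩ => ?_⟩
  simpa [SimpleGraph.mem_neighborSet] using hodd v (by simp) ⟨u, by simp, hvu⟩

end OddColoringOn

namespace TreeDecomposition

variable {G : SimpleGraph V} (td : TreeDecomposition G)

noncomputable def top (r : td.ι) (v : V) : td.ι :=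
  Function.argminOn (td.tree.dist r) {i | v ∈ td.bag i} (td.mem_bag v)

theorem mem_bag_top (r : td.ι) (v : V) : v ∈ td.bag (td.top r v) :=
  Function.argminOn_mem (td.tree.dist r) {i | v ∈ td.bag i} _

theorem isMinOn_top (r : td.ι) (v : V) :
    IsMinOn (td.tree.dist r) {i | v ∈ td.bag i} (td.top r v) :=
  isMinOn_iff.mpr fun _ hi => Function.argminOn_le _ _ hi

theorem mem_bag_top_of_dist_le (r : td.ι) {u v : V} {j : td.ι} (hu : u ∈ td.bag j)
    (hv : v ∈ td.bag j) (h : td.tree.dist r (td.top r u) ≤ td.tree.dist r (td.top r v)) :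
    u ∈ td.bag (td.top r v) :=
  td.isTree.mem_of_isMinOn_of_le (td.bag_connected u) (td.bag_connected v) (td.mem_bag_top r u)
    (td.isMinOn_top r u) (td.mem_bag_top r v) (td.isMinOn_top r v) hu hv h

def bagGraph : SimpleGraph V where
  Adj u v := u ≠ v ∧ ∃ i, u ∈ td.bag i ∧ v ∈ td.bag i
  symm := ⟨fun _ _ ⟨huv, i, hu, hv⟩ => ⟨huv.symm, i, hv, hu⟩⟩
  loopless := ⟨fun _ h => h.1 rfl⟩

theorem le_bagGraph : G ≤ td.bagGraph := fun _ _ h => ⟨h.ne, td.edge_bag h⟩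

theorem exists_isOddColoring [Fintype V] {t : ℕ} (hw : ∀ i, (td.bag i).card ≤ t + 1) :
    ∃ f : V → Fin (2 * t + 1), IsOddColoring G f := by
  classical
  obtain ⟨r⟩ := td.isTree.connected.nonempty
  refine exists_isOddColoring_of_elimination td.le_bagGraph (fun v => td.tree.dist r (td.top r v))
    (fun v => (td.bag (td.top r v)).erase v) (fun v => ?_) (fun v => ?_) ?_
  · rw [Finset.card_erase_of_mem (td.mem_bag_top r v)]
    have := hw (td.top r v)
    omega
  · intro u hu w hw huw
    exact ⟨huw, _, Finset.mem_of_mem_erase hu, Finset.mem_of_mem_erase hw⟩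
  · rintro u v ⟨hvu, j, hv, hu⟩ hle
    exact Finset.mem_erase.mpr ⟨hvu.symm, td.mem_bag_top_of_dist_le r hu hv hle⟩

def single [Fintype V] (G : SimpleGraph V) : TreeDecomposition G where
  ι := Unit
  tree := ⊥
  isTree := .of_subsingleton
  bag _ := Finset.univ
  mem_bag v := ⟨(), Finset.mem_univ v⟩
  edge_bag u w _ := ⟨(), Finset.mem_univ u, Finset.mem_univ w⟩
  bag_connected v :=
    have : Nonempty {_i : Unit | v ∈ (Finset.univ : Finset V)} :=
      ⟨⟨(), Finset.mem_univ v⟩⟩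
    .of_subsingleton

end TreeDecomposition

theorem exists_treeDecomposition_card_bag_le_treewidth [Fintype V] (G : SimpleGraph V) :
    ∃ td : TreeDecomposition G, ∀ i, (td.bag i).card ≤ treewidth G + 1 := by
  have hsingle : ∀ i, ((TreeDecomposition.single G).bag i).card ≤ Fintype.card V + 1 :=
    fun _ => (Finset.card_le_univ _).trans (Nat.le_succ _)
  exact Nat.sInf_mem (s := {w | ∃ td : TreeDecomposition G, ∀ i, (td.bag i).card ≤ w + 1})
    ⟨_, _, hsingle⟩

theorem oddChi_le {G : SimpleGraph V} {k : ℕ} (h : ∃ f : V → Fin k, IsOddColoring G f) :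
    oddChi G ≤ k :=
  Nat.sInf_le h

/-- `χ_o(G) ≤ 2·tw(G) + 1`. -/
theorem stmt_13 [Fintype V] (G : SimpleGraph V) :
    oddChi G ≤ 2 * treewidth G + 1 := by
  obtain ⟨td, hw⟩ := exists_treeDecomposition_card_bag_le_treewidth G
  exact oddChi_le (td.exists_isOddColoring hw)
end

section
/- If G is an interval graph, then ω(G) ≤ χ_o(G) ≤ ω(G) + 1, where ω(G) is the clique number. -/
variable {V : Type*} {α : Type*} {β : Type*} {W : Type*}

/-- `G` is an interval graph: it is the intersection graph of a family of closed
real intervals. -/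
def IsIntervalGraph (G : SimpleGraph V) : Prop :=
  ∃ l r : V → ℝ, (∀ v : V, l v ≤ r v) ∧
    ∀ u w : V, G.Adj u w ↔ u ≠ w ∧ max (l u) (l w) ≤ min (r u) (r w)

/-- `G` is a proper interval graph: an interval representation in which no
interval properly contains another. -/
def IsProperIntervalGraph (G : SimpleGraph V) : Prop :=
  ∃ l r : V → ℝ, (∀ v : V, l v ≤ r v) ∧
    (∀ u w : V, G.Adj u w ↔ u ≠ w ∧ max (l u) (l w) ≤ min (r u) (r w)) ∧
    ∀ u w : V, ¬ (l u < l w ∧ r w < r u)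

open Finset
namespace OddIntervalAux
noncomputable section
open Classical
variable {V : Type*} [Fintype V]

def adjI (l r : V → ℝ) (u w : V) : Prop := u ≠ w ∧ max (l u) (l w) ≤ min (r u) (r w)

omit [Fintype V] in
lemma adjI.symm {l r : V → ℝ} {u w : V} (h : adjI l r u w) : adjI l r w u :=
  ⟨h.1.symm, by rw [max_comm, min_comm]; exact h.2⟩

def aset (l r : V → ℝ) (ord : V → ℕ) (z : V) : Finset V :=
  univ.filter (fun u => ord u < ord z ∧ l z ≤ r u)

def cnt (l r : V → ℝ) (ord : V → ℕ) (k : ℕ) (g : V → Fin (k+1)) (z u : V)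
    (c0 : Fin (k+1)) : ℕ :=
  (univ.filter (fun w => ord w < ord z ∧ adjI l r u w ∧ g w = c0)).card

def oddAt (l r : V → ℝ) (ord : V → ℕ) (k : ℕ) (g : V → Fin (k+1)) (z u : V) :
    Finset (Fin (k+1)) :=
  univ.filter (fun c0 => Odd (cnt l r ord k g z u c0))

def forb (l r : V → ℝ) (ord : V → ℕ) (k : ℕ) (g : V → Fin (k+1)) (z : V) :
    Finset (Fin (k+1)) :=
  ((aset l r ord z).image g) ∪
    (univ.filter (fun c0 => ∃ u ∈ aset l r ord z, oddAt l r ord k g z u = {c0}))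

def pick (l r : V → ℝ) (ord : V → ℕ) (k : ℕ) (g : V → Fin (k+1)) (z : V) : Fin (k+1) :=
  if h : (univ \ forb l r ord k g z).Nonempty then h.choose else default

lemma pick_congr (l r : V → ℝ) (ord : V → ℕ) (k : ℕ) {g g' : V → Fin (k+1)} (z : V)
    (h : ∀ u, ord u < ord z → g u = g' u) :
    pick l r ord k g z = pick l r ord k g' z := by
  have hcnt : ∀ u c0, cnt l r ord k g z u c0 = cnt l r ord k g' z u c0 := by
    intro u c0
    unfold cnt
    congr 1
    apply Finset.filter_congr
    intro w _
    constructor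
    · rintro ⟨h1, h2, h3⟩; exact ⟨h1, h2, by rw [← h w h1]; exact h3⟩
    · rintro ⟨h1, h2, h3⟩; exact ⟨h1, h2, by rw [h w h1]; exact h3⟩
  have hodd : ∀ u, oddAt l r ord k g z u = oddAt l r ord k g' z u := by
    intro u; unfold oddAt; congr 1; funext c0; rw [hcnt]
  have himg : (aset l r ord z).image g = (aset l r ord z).image g' := by
    apply Finset.image_congr
    intro u hu
    simp only [aset, mem_coe, mem_filter] at hu
    exact h u hu.2.1
  have hforb : forb l r ord k g z = forb l r ord k g' z := by
    unfold forb
    rw [himg]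
    congr 1
    apply Finset.filter_congr
    intro c0 _
    constructor
    · rintro ⟨u, hu, he⟩; exact ⟨u, hu, by rw [← hodd]; exact he⟩
    · rintro ⟨u, hu, he⟩; exact ⟨u, hu, by rw [hodd]; exact he⟩
  unfold pick
  rw [hforb]

def col (l r : V → ℝ) (ord : V → ℕ) (k : ℕ) (v : V) : Fin (k+1) :=
  pick l r ord k (fun u => if h : ord u < ord v then col l r ord k u else default) v
termination_by ord v
decreasing_by exact h

lemma col_eq (l r : V → ℝ) (ord : V → ℕ) (k : ℕ) (v : V) :
    col l r ord k v = pick l r ord k (col l r ord k) v := by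
  rw [col]
  exact pick_congr l r ord k v (fun u hu => dif_pos hu)

lemma col_success (l r : V → ℝ) (ord : V → ℕ) (k : ℕ)
    (hlr : ∀ v, l v ≤ r v)
    (hinj : Function.Injective ord)
    (hmono : ∀ u v : V, ord u < ord v → l u ≤ l v)
    (hA : ∀ z : V, (aset l r ord z).card < k) :
    ∀ v : V, col l r ord k v ∉ forb l r ord k (col l r ord k) v := by
  set g := col l r ord k with hg
  suffices main : ∀ m : ℕ, ∀ v : V, ord v < m → g v ∉ forb l r ord k g v by
    intro v; exact main (ord v + 1) v (Nat.lt_succ_self _)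
  intro m
  induction m with
  | zero => intro v hv; omega
  | succ m ih =>
    intro v hv
    rcases Nat.lt_or_ge (ord v) m with h | h
    · exact ih v h
    have hvm : ord v = m := by omega
    -- properness on the prefix
    have prop : ∀ u w : V, ord u < ord v → ord w < ord v → adjI l r u w → g u ≠ g w := by
      intro u w hu hw hadj
      rcases Nat.lt_trichotomy (ord u) (ord w) with hlt | heq | hgt
      · have hmemA : u ∈ aset l r ord w := by
          simp only [aset, mem_filter]
          refine ⟨mem_univ _, hlt, ?_⟩
          calc l w ≤ max (l u) (l w) := le_max_right _ _
            _ ≤ min (r u) (r w) := hadj.2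
            _ ≤ r u := min_le_left _ _
        have hsw := ih w (by omega)
        intro hc
        apply hsw
        unfold forb
        exact mem_union_left _ (mem_image.mpr ⟨u, hmemA, hc⟩)
      · exact absurd (hinj heq) hadj.1
      · have hmemA : w ∈ aset l r ord u := by
          simp only [aset, mem_filter]
          refine ⟨mem_univ _, hgt, ?_⟩
          calc l u ≤ max (l u) (l w) := le_max_left _ _
            _ ≤ min (r u) (r w) := hadj.2
            _ ≤ r w := min_le_right _ _
        have hsu := ih u (by omega)
        intro hc
        apply hsu
        unfold forb
        exact mem_union_left _ (mem_image.mpr ⟨w, hmemA, hc.symm⟩)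
    set A := aset l r ord v with hAdef
    set Sf := univ.filter
      (fun c0 : Fin (k+1) => ∃ u ∈ A, oddAt l r ord k g v u = {c0}) with hSf
    have h1 : (Sf \ A.image g).card ≤ 1 := by
      rw [Finset.card_le_one]
      intro c1 hc1 c2 hc2
      rw [mem_sdiff, hSf, mem_filter] at hc1 hc2
      obtain ⟨⟨-, u1, hu1A, hodd1⟩, hn1⟩ := hc1
      obtain ⟨⟨-, u2, hu2A, hodd2⟩, hn2⟩ := hc2
      have hAne : A.Nonempty := ⟨u1, hu1A⟩
      obtain ⟨u0, hu0A, hmin⟩ := Finset.exists_min_image A ord hAne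
      have hu0 : ord u0 < ord v ∧ l v ≤ r u0 := by
        have := hu0A; rw [hAdef] at this
        simpa [aset] using this
      have key : ∀ u, u ∈ A → ∀ c0 : Fin (k+1),
          oddAt l r ord k g v u = {c0} → c0 ∉ A.image g → u = u0 := by
        intro u huA c0 hodd hnotin
        by_contra hne
        have hlt : ord u0 < ord u :=
          lt_of_le_of_ne (hmin u huA) (fun hh => hne (hinj hh).symm)
        have hlu : l u0 ≤ l u := hmono _ _ hlt
        have hu' : ord u < ord v ∧ l v ≤ r u := by
          have := huA; rw [hAdef] at this
          simpa [aset] using this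
        have hluv : l u ≤ l v := hmono _ _ hu'.1
        have hadj0 : adjI l r u u0 := by
          refine ⟨hne, ?_⟩
          exact le_trans (max_le hluv (hmono _ _ hu0.1))
              (le_min hu'.2 hu0.2)
        have hgu0 : g u0 ∈ A.image g := mem_image_of_mem g hu0A
        have hne0 : g u0 ≠ c0 := fun hh => hnotin (hh ▸ hgu0)
        set T := univ.filter (fun w => ord w < ord v ∧ adjI l r u w ∧ g w = g u0) with hT
        have hTc : cnt l r ord k g v u (g u0) = T.card := rfl
        have hnotodd : ¬ Odd (cnt l r ord k g v u (g u0)) := by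
          intro hodd'
          have hmem : g u0 ∈ oddAt l r ord k g v u := by
            simp only [oddAt, mem_filter]
            exact ⟨mem_univ _, hodd'⟩
          rw [hodd, mem_singleton] at hmem
          exact hne0 hmem
        have heven : Even T.card := by
          rw [← hTc]; exact Nat.not_odd_iff_even.mp hnotodd
        have hu0T : u0 ∈ T := by
          rw [hT, mem_filter]
          exact ⟨mem_univ _, hu0.1, hadj0, rfl⟩
        have hcard2 : 1 < T.card := by
          have hpos : 0 < T.card := card_pos.mpr ⟨u0, hu0T⟩
          rw [Nat.even_iff] at heven
          omega
        obtain ⟨w, hwT, hwne⟩ := Finset.exists_mem_ne hcard2 u0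
        rw [hT, mem_filter] at hwT
        obtain ⟨-, hwv, hwadj, hwg⟩ := hwT
        have hadjw : adjI l r u0 w := by
          refine ⟨fun hh => hwne hh.symm, ?_⟩
          have h2 : l u ≤ r w := le_trans (le_max_left _ _) (le_trans hwadj.2 (min_le_right _ _))
          have h3 : l u0 ≤ r w := le_trans hlu h2
          have h4 : l w ≤ r u0 := le_trans (hmono _ _ hwv) hu0.2
          exact max_le (le_min (hlr u0) h3) (le_min h4 (hlr w))
        exact prop u0 w hu0.1 hwv hadjw hwg.symm
      have e1 := key u1 hu1A c1 hodd1 hn1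
      have e2 := key u2 hu2A c2 hodd2 hn2
      rw [e1] at hodd1; rw [e2] at hodd2
      have : ({c1} : Finset (Fin (k+1))) = {c2} := hodd1.symm.trans hodd2
      exact Finset.singleton_inj.mp this
    have hsub : forb l r ord k g v ⊆ (A.image g) ∪ (Sf \ A.image g) := by
      intro c hc
      unfold forb at hc
      rcases mem_union.mp hc with hc | hc
      · exact mem_union_left _ hc
      · by_cases hcim : c ∈ A.image g
        · exact mem_union_left _ hcim
        · exact mem_union_right _ (mem_sdiff.mpr ⟨hc, hcim⟩)
    have hcard : (forb l r ord k g v).card ≤ A.card + 1 :=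
      le_trans (card_le_card hsub)
        (le_trans (card_union_le _ _) (Nat.add_le_add card_image_le h1))
    have hne : (univ \ forb l r ord k g v).Nonempty := by
      rw [← card_pos, card_sdiff_of_subset (subset_univ _), card_univ, Fintype.card_fin]
      have := hA v
      rw [← hAdef] at this
      omega
    have hcol : g v = pick l r ord k g v := col_eq l r ord k v
    rw [hcol]
    unfold pick
    rw [dif_pos hne]
    have hs := hne.choose_spec
    rw [mem_sdiff] at hs
    exact hs.2


lemma col_proper (l r : V → ℝ) (ord : V → ℕ) (k : ℕ)
    (hlr : ∀ v, l v ≤ r v)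
    (hinj : Function.Injective ord)
    (hmono : ∀ u v : V, ord u < ord v → l u ≤ l v)
    (hA : ∀ z : V, (aset l r ord z).card < k) :
    ∀ u w : V, adjI l r u w → col l r ord k u ≠ col l r ord k w := by
  intro u w hadj
  rcases Nat.lt_trichotomy (ord u) (ord w) with hlt | heq | hgt
  · have hmemA : u ∈ aset l r ord w := by
      simp only [aset, mem_filter]
      refine ⟨mem_univ _, hlt, ?_⟩
      calc l w ≤ max (l u) (l w) := le_max_right _ _
        _ ≤ min (r u) (r w) := hadj.2
        _ ≤ r u := min_le_left _ _
    have hsw := col_success l r ord k hlr hinj hmono hA w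
    intro hc
    apply hsw
    unfold forb
    exact mem_union_left _ (mem_image.mpr ⟨u, hmemA, hc⟩)
  · exact absurd (hinj heq) hadj.1
  · have hmemA : w ∈ aset l r ord u := by
      simp only [aset, mem_filter]
      refine ⟨mem_univ _, hgt, ?_⟩
      calc l u ≤ max (l u) (l w) := le_max_left _ _
        _ ≤ min (r u) (r w) := hadj.2
        _ ≤ r w := min_le_right _ _
    have hsu := col_success l r ord k hlr hinj hmono hA u
    intro hc
    apply hsu
    unfold forb
    exact mem_union_left _ (mem_image.mpr ⟨w, hmemA, hc.symm⟩)

lemma col_odd (l r : V → ℝ) (ord : V → ℕ) (k : ℕ)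
    (hlr : ∀ v, l v ≤ r v)
    (hinj : Function.Injective ord)
    (hmono : ∀ u v : V, ord u < ord v → l u ≤ l v)
    (hA : ∀ z : V, (aset l r ord z).card < k)
    (v : V) (hnev : ∃ w, adjI l r v w) :
    ∃ c : Fin (k+1),
      Odd ((univ.filter (fun u => adjI l r v u ∧ col l r ord k u = c)).card) := by
  set g := col l r ord k with hg
  set NB := univ.filter (fun u => adjI l r v u) with hNB
  have hNBne : NB.Nonempty := by
    obtain ⟨w, hw⟩ := hnev
    exact ⟨w, by rw [hNB, mem_filter]; exact ⟨mem_univ _, hw⟩⟩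
  obtain ⟨z, hzNB, hzmax⟩ := Finset.exists_max_image NB ord hNBne
  rw [hNB, mem_filter] at hzNB
  have hzadj : adjI l r v z := hzNB.2
  have hlvrz : l v ≤ r z := le_trans (le_max_left _ _) (le_trans hzadj.2 (min_le_right _ _))
  have hlzrv : l z ≤ r v := le_trans (le_max_right _ _) (le_trans hzadj.2 (min_le_left _ _))
  by_cases hcase : ord z < ord v
  · refine ⟨g z, ?_⟩
    have hset : univ.filter (fun u => adjI l r v u ∧ g u = g z) = {z} := by
      apply Finset.eq_singleton_iff_unique_mem.mpr
      constructor
      · rw [mem_filter]; exact ⟨mem_univ _, hzadj, rfl⟩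
      · intro u hu
        rw [mem_filter] at hu
        obtain ⟨-, huadj, hug⟩ := hu
        by_contra hne
        have huNB : u ∈ NB := by rw [hNB, mem_filter]; exact ⟨mem_univ _, huadj⟩
        have hultv : ord u < ord v := lt_of_le_of_lt (hzmax u huNB) hcase
        have h1 : l u ≤ l v := hmono _ _ hultv
        have h2 : l z ≤ l v := hmono _ _ hcase
        have h3 : l v ≤ r u := le_trans (le_max_left _ _) (le_trans huadj.2 (min_le_right _ _))
        have hadjuz : adjI l r u z :=
          ⟨hne, max_le (le_min (hlr u) (h1.trans hlvrz)) (le_min (h2.trans h3) (hlr z))⟩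
        exact col_proper l r ord k hlr hinj hmono hA u z hadjuz hug
    rw [hset, card_singleton]
    exact odd_one
  · have hzv : v ≠ z := hzadj.1
    have hordvz : ord v < ord z := by
      rcases Nat.lt_trichotomy (ord v) (ord z) with h | h | h
      · exact h
      · exact absurd (hinj h) hzv
      · exact absurd h hcase
    have hvA : v ∈ aset l r ord z := by
      simp only [aset, mem_filter]
      exact ⟨mem_univ _, hordvz, hlzrv⟩
    have hsucc := col_success l r ord k hlr hinj hmono hA z
    have hSnot : ¬ (oddAt l r ord k g z v = {g z}) := by
      intro hodd
      apply hsucc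
      unfold forb
      apply mem_union_right
      rw [mem_filter]
      exact ⟨mem_univ _, v, hvA, hodd⟩
    have hsplit : ∀ c0 : Fin (k+1),
        (univ.filter (fun u => adjI l r v u ∧ g u = c0)).card
          = cnt l r ord k g z v c0 + (if g z = c0 then 1 else 0) := by
      intro c0
      by_cases hgz : g z = c0
      · rw [if_pos hgz]
        have hins : univ.filter (fun u => adjI l r v u ∧ g u = c0)
            = insert z (univ.filter (fun w => ord w < ord z ∧ adjI l r v w ∧ g w = c0)) := by
          ext u
          simp only [mem_filter, mem_insert, mem_univ, true_and]
          constructor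
          · rintro ⟨hadj, hc⟩
            by_cases hu : u = z
            · exact Or.inl hu
            · right
              have huNB : u ∈ NB := by rw [hNB, mem_filter]; exact ⟨mem_univ _, hadj⟩
              have h1 : ord u ≤ ord z := hzmax u huNB
              exact ⟨lt_of_le_of_ne h1 (fun hh => hu (hinj hh)), hadj, hc⟩
          · rintro (rfl | ⟨-, hadj, hc⟩)
            · exact ⟨hzadj, hgz⟩
            · exact ⟨hadj, hc⟩
        have hnotm : z ∉ univ.filter (fun w => ord w < ord z ∧ adjI l r v w ∧ g w = c0) := by
          simp
        rw [hins, card_insert_of_notMem hnotm]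
        rfl
      · rw [if_neg hgz]
        have heq : univ.filter (fun u => adjI l r v u ∧ g u = c0)
            = univ.filter (fun w => ord w < ord z ∧ adjI l r v w ∧ g w = c0) := by
          ext u
          simp only [mem_filter, mem_univ, true_and]
          constructor
          · rintro ⟨hadj, hc⟩
            have hu : u ≠ z := fun hh => hgz (by rw [← hh]; exact hc)
            have huNB : u ∈ NB := by rw [hNB, mem_filter]; exact ⟨mem_univ _, hadj⟩
            exact ⟨lt_of_le_of_ne (hzmax u huNB) (fun hh => hu (hinj hh)), hadj, hc⟩
          · rintro ⟨-, hadj, hc⟩; exact ⟨hadj, hc⟩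
        rw [heq]
        simp [cnt]
    by_cases hex : ∃ c0, Odd (cnt l r ord k g z v c0) ∧ c0 ≠ g z
    · obtain ⟨c0, hoddc, hnec⟩ := hex
      refine ⟨c0, ?_⟩
      rw [hsplit c0, if_neg (fun hh => hnec hh.symm)]
      simpa using hoddc
    · push_neg at hex
      by_cases hoz : Odd (cnt l r ord k g z v (g z))
      · exfalso
        apply hSnot
        ext c0
        simp only [oddAt, mem_filter, mem_univ, true_and, mem_singleton]
        constructor
        · intro h; exact hex c0 h
        · rintro rfl; exact hoz
      · refine ⟨g z, ?_⟩
        rw [hsplit (g z), if_pos rfl]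
        exact (Nat.not_odd_iff_even.mp hoz).add_one


lemma exists_ord (l : V → ℝ) :
    ∃ ord : V → ℕ, Function.Injective ord ∧ ∀ u v : V, ord u < ord v → l u ≤ l v := by
  let e : Fin (Fintype.card V) ≃ V := (Fintype.equivFin V).symm
  let σ := Tuple.sort (l ∘ e)
  let p : Fin (Fintype.card V) ≃ V := σ.trans e
  refine ⟨fun v => (p.symm v : ℕ), ?_, ?_⟩
  · intro a b h
    exact p.symm.injective (Fin.val_injective h)
  · intro u v h
    have hm : Monotone (l ∘ p) := Tuple.monotone_sort (l ∘ e)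
    have hle : p.symm u ≤ p.symm v := le_of_lt h
    have := hm hle
    simpa using this

theorem interval_odd_coloring (G : SimpleGraph V) (l r : V → ℝ)
    (hlr : ∀ v, l v ≤ r v)
    (hiff : ∀ u w : V, G.Adj u w ↔ u ≠ w ∧ max (l u) (l w) ≤ min (r u) (r w)) :
    ∃ f : V → Fin (G.cliqueNum + 1), IsOddColoring G f := by
  obtain ⟨ord, hinj, hmono⟩ := exists_ord l
  have hadj_iff : ∀ u w : V, G.Adj u w ↔ adjI l r u w := hiff
  set k := G.cliqueNum with hk
  have hA : ∀ z : V, (aset l r ord z).card < k := by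
    intro z
    have hmem : ∀ x ∈ insert z (aset l r ord z), l x ≤ l z ∧ l z ≤ r x := by
      intro x hx
      rcases mem_insert.mp hx with rfl | hx
      · exact ⟨le_refl _, hlr x⟩
      · simp only [aset, mem_filter] at hx
        exact ⟨hmono _ _ hx.2.1, hx.2.2⟩
    have hclq : G.IsClique (insert z (aset l r ord z) : Finset V) := by
      intro a ha b hb hab
      obtain ⟨ha1, ha2⟩ := hmem a (Finset.mem_coe.mp ha)
      obtain ⟨hb1, hb2⟩ := hmem b (Finset.mem_coe.mp hb)
      rw [hiff]
      exact ⟨hab, max_le (le_min (hlr a) (ha1.trans hb2)) (le_min (hb1.trans ha2) (hlr b))⟩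
    have hcard : (insert z (aset l r ord z)).card ≤ G.cliqueNum :=
      SimpleGraph.IsClique.card_le_cliqueNum (tc := hclq)
    have hz : z ∉ aset l r ord z := by simp [aset]
    rw [card_insert_of_notMem hz] at hcard
    omega
  refine ⟨col l r ord k, ?_, ?_⟩
  · intro u w huw
    exact col_proper l r ord k hlr hinj hmono hA u w ((hadj_iff u w).mp huw)
  · intro v hv
    obtain ⟨w, hw⟩ := hv
    have hnev : ∃ w, adjI l r v w := ⟨w, (hadj_iff v w).mp hw⟩
    obtain ⟨c, hc⟩ := col_odd l r ord k hlr hinj hmono hA v hnev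
    refine ⟨c, ?_⟩
    have hseteq : {u : V | u ∈ G.neighborSet v ∧ col l r ord k u = c}
        = ↑(univ.filter (fun u => adjI l r v u ∧ col l r ord k u = c)) := by
      ext u
      simp only [Set.mem_setOf_eq, coe_filter, SimpleGraph.mem_neighborSet, mem_univ,
        true_and]
      rw [hadj_iff]
    rw [hseteq, Set.ncard_coe_finset]
    exact hc

end
end OddIntervalAux

/-- for an interval graph, `ω(G) ≤ χ_o(G) ≤ ω(G) + 1`. -/
theorem stmt_14 [Fintype V] (G : SimpleGraph V) (hint : IsIntervalGraph G) :
    G.cliqueNum ≤ oddChi G ∧ oddChi G ≤ G.cliqueNum + 1 := by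
  obtain ⟨l, r, hlr, hiff⟩ := hint
  obtain ⟨f, hf⟩ := OddIntervalAux.interval_odd_coloring G l r hlr hiff
  have hmem : (G.cliqueNum + 1) ∈ {k : ℕ | ∃ f : V → Fin k, IsOddColoring G f} := ⟨f, hf⟩
  constructor
  · apply le_csInf ⟨_, hmem⟩
    rintro m ⟨f', hf'⟩
    obtain ⟨s, hs⟩ := SimpleGraph.exists_isNClique_cliqueNum (G := G)
    have hinj : Set.InjOn f' ↑s := by
      intro a ha b hb hab
      by_contra hne
      exact hf'.1 (hs.1 ha hb hne) hab
    have hle : s.card ≤ (Finset.univ : Finset (Fin m)).card :=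
      Finset.card_le_card_of_injOn f' (fun a _ => Finset.mem_univ _) hinj
    rw [Finset.card_univ, Fintype.card_fin] at hle
    rw [← hs.2]
    exact hle
  · exact Nat.sInf_le hmem
end

section
/- Let G = (K, I) be a split graph with K a maximal clique of size k and I an independent set. Assigning k distinct colors to the vertices of K and one additional color k+1 to all vertices of I yields an odd (k+1)-coloring of G; hence χ_o(G) ≤ k + 1. -/
variable {V : Type*} {α : Type*} {β : Type*} {W : Type*}

/-- coloring the maximal clique `K` of a split graph with `k`
distinct colors and all of `I` with one extra color gives an odd
`(k+1)`-coloring, hence `χ_o(G) ≤ k + 1`. -/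
theorem stmt_17 [Fintype V] (G : SimpleGraph V) (K I : Set V)
    (hsplit : IsSplitPartition G K I) (k : ℕ) (hk : K.ncard = k)
    (f : V → Fin (k + 1))
    (hinj : Set.InjOn f K)
    (hKcol : ∀ v ∈ K, f v ≠ Fin.last k)
    (hIcol : ∀ u ∈ I, f u = Fin.last k) :
    IsOddColoring G f ∧ oddChi G ≤ k + 1 := by
  obtain ⟨hclique, hind, hcover, hdisj, hmax⟩ := hsplit
  have hmem : ∀ v : V, v ∈ K ∨ v ∈ I := by
    intro v
    have : v ∈ K ∪ I := by rw [hcover]; trivial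
    exact this
  have hproper : IsProperColoring G f := by
    intro u w huw h
    rcases hmem u with hu | hu <;> rcases hmem w with hw | hw
    · exact G.ne_of_adj huw (hinj hu hw h)
    · exact hKcol u hu (h.trans (hIcol w hw))
    · exact hKcol w hw (h.symm.trans (hIcol u hu))
    · exact hind u hu w hw huw
  -- key lemma: if w ∈ K is a neighbor of v, the color class of f w in N(v) is {w}
  have key : ∀ v w : V, w ∈ K → G.Adj v w →
      {u : V | u ∈ G.neighborSet v ∧ f u = f w} = {w} := by
    intro v w hwK hvw
    ext x
    simp only [Set.mem_setOf_eq, Set.mem_singleton_iff, SimpleGraph.mem_neighborSet]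
    constructor
    · rintro ⟨hx, hfx⟩
      rcases hmem x with hxK | hxI
      · exact hinj hxK hwK hfx
      · exact absurd (hfx.symm.trans (hIcol x hxI)) (hKcol w hwK)
    · rintro rfl; exact ⟨hvw, rfl⟩
  have hodd : IsOddColoring G f := by
    refine ⟨hproper, fun v hne => ?_⟩
    obtain ⟨u, hu⟩ := hne
    rw [SimpleGraph.mem_neighborSet] at hu
    rcases hmem u with huK | huI
    · exact ⟨f u, by rw [key v u huK hu, Set.ncard_singleton]; exact odd_one⟩
    · rcases hmem v with hvK | hvI
      · -- v ∈ K, u ∈ I adjacent to v: by maximality ∃ w ∈ K, ¬ Adj u w, and w ≠ v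
        have := hmax u huI
        push_neg at this
        obtain ⟨w, hwK, hnadj⟩ := this
        have hwv : w ≠ v := fun h => hnadj (h ▸ hu.symm)
        have hvw : G.Adj v w := hclique hvK hwK (Ne.symm hwv)
        exact ⟨f w, by rw [key v w hwK hvw, Set.ncard_singleton]; exact odd_one⟩
      · exact absurd hu (hind v hvI u huI)
  refine ⟨hodd, Nat.sInf_le ⟨f, hodd⟩⟩
end
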